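/- The Prasad-Rao moment estimator Ψ̂₀ = m⁻¹ Σᵢ {(yᵢ − Xᵢβ̃)(yᵢ − Xᵢβ̃)ᵀ − Dᵢ}, with β̃ the OLS estimator, has bias E[Ψ̂₀] − Ψ = m⁻¹ Σᵢ Xᵢ(XᵀX)⁻¹{Σⱼ Xⱼᵀ(Ψ + Dⱼ)Xⱼ}(XᵀX)⁻¹Xᵢᵀ − m⁻¹ Σᵢ (Ψ + Dᵢ)Xᵢ(XᵀX)⁻¹Xᵢᵀ − m⁻¹ Σᵢ Xᵢ(XᵀX)⁻¹Xᵢᵀ(Ψ + Dᵢ). -/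
import Mathlib

open MeasureTheory Matrix

lemma stmt8_sum_ite_const {α : Type*} [Fintype α] (c : Prop) [Decidable c] (f : α → ℝ) :
    ∑ x, (if c then f x else 0) = if c then ∑ x, f x else 0 := by
  split_ifs <;> simp

lemma stmt8_sandwich {ι₁ ι₂ ι₃ ι₄ : Type*} [Fintype ι₂] [Fintype ι₃]
    (A : Matrix ι₁ ι₂ ℝ) (P : Matrix ι₂ ι₃ ℝ) (B : Matrix ι₄ ι₃ ℝ) (a : ι₁) (b : ι₄) :
    ∑ c, ∑ d, A a c * B b d * P c d = (A * P * Bᵀ) a b := by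
  simp only [Matrix.mul_apply, Matrix.transpose_apply, Finset.sum_mul]
  rw [Finset.sum_comm]
  exact Finset.sum_congr rfl fun d _ => Finset.sum_congr rfl fun c _ => by ring

/-- The Prasad-Rao moment estimator `Ψ̂₀ = m⁻¹ Σᵢ {(yᵢ − Xᵢβ̃)(yᵢ − Xᵢβ̃)ᵀ − Dᵢ}`, with
`β̃` the OLS estimator in the stacked model, has bias
`E[Ψ̂₀] − Ψ = m⁻¹ Σᵢ Xᵢ(XᵀX)⁻¹{Σⱼ Xⱼᵀ(Ψ+Dⱼ)Xⱼ}(XᵀX)⁻¹Xᵢᵀ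
  − m⁻¹ Σᵢ (Ψ+Dᵢ)Xᵢ(XᵀX)⁻¹Xᵢᵀ − m⁻¹ Σᵢ Xᵢ(XᵀX)⁻¹Xᵢᵀ(Ψ+Dᵢ)`. -/
theorem stmt8 {Ω : Type*} [MeasureSpace Ω] (μ : Measure Ω) [IsProbabilityMeasure μ]
    (m k s : ℕ) (hm : 0 < m)
    (Xs : Fin m → Matrix (Fin k) (Fin s) ℝ) (β : Fin s → ℝ)
    (Ψ : Matrix (Fin k) (Fin k) ℝ) (D : Fin m → Matrix (Fin k) (Fin k) ℝ)
    (X : Matrix (Fin m × Fin k) (Fin s) ℝ) (hX : X = Matrix.of fun p j => Xs p.1 p.2 j)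
    (hXX : IsUnit (Xᵀ * X).det)
    (y : Fin m → Ω → Fin k → ℝ)
    (hmean : ∀ i a, (∫ ω, y i ω a ∂μ) = (Xs i).mulVec β a)
    (hcov : ∀ i a b,
      (∫ ω, (y i ω - (Xs i).mulVec β) a * (y i ω - (Xs i).mulVec β) b ∂μ) = (Ψ + D i) a b)
    (hcross : ∀ i j, i ≠ j → ∀ a b,
      (∫ ω, (y i ω - (Xs i).mulVec β) a * (y j ω - (Xs j).mulVec β) b ∂μ) = 0)
    (hint : ∀ i j a b,
      Integrable (fun ω => (y i ω - (Xs i).mulVec β) a * (y j ω - (Xs j).mulVec β) b) μ)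
    (hint1 : ∀ i a, Integrable (fun ω => y i ω a) μ)
    (βtil : Ω → Fin s → ℝ)
    (hβtil : βtil = fun ω => (Xᵀ * X)⁻¹.mulVec (Xᵀ.mulVec (fun p => y p.1 ω p.2)))
    (Ψhat : Ω → Matrix (Fin k) (Fin k) ℝ)
    (hΨhat : Ψhat = fun ω => (m : ℝ)⁻¹ •
      ∑ i, ((Matrix.of fun a b =>
        (y i ω - (Xs i).mulVec (βtil ω)) a * (y i ω - (Xs i).mulVec (βtil ω)) b) - D i)) :
    ∀ a b, (∫ ω, Ψhat ω a b ∂μ) - Ψ a b =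
      ((m : ℝ)⁻¹ • ∑ i, Xs i * (Xᵀ * X)⁻¹ * (∑ j, (Xs j)ᵀ * (Ψ + D j) * Xs j) *
          (Xᵀ * X)⁻¹ * (Xs i)ᵀ
        - (m : ℝ)⁻¹ • ∑ i, (Ψ + D i) * Xs i * (Xᵀ * X)⁻¹ * (Xs i)ᵀ
        - (m : ℝ)⁻¹ • ∑ i, Xs i * (Xᵀ * X)⁻¹ * (Xs i)ᵀ * (Ψ + D i)) a b := by
  intro a b
  have hm' : (m : ℝ) ≠ 0 := Nat.cast_ne_zero.mpr hm.ne'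
  have hGsym : ((Xᵀ * X)⁻¹)ᵀ = (Xᵀ * X)⁻¹ := by
    rw [Matrix.transpose_nonsing_inv, Matrix.transpose_mul, Matrix.transpose_transpose]
  -- notation
  set u : Fin m → Fin k → Fin m × Fin k → ℝ :=
    fun i c p => (if p = (i, c) then 1 else 0) - (Xs i * (Xᵀ * X)⁻¹ * Xᵀ) c p with hu
  set Ew : Fin m × Fin k → Fin m × Fin k → ℝ :=
    fun p q => if p.1 = q.1 then (Ψ + D p.1) p.2 q.2 else 0 with hEw
  -- covariance of the stacked errors
  have hEp : ∀ p q : Fin m × Fin k,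
      (∫ ω, (y p.1 ω - (Xs p.1).mulVec β) p.2 * (y q.1 ω - (Xs q.1).mulVec β) q.2 ∂μ)
        = Ew p q := by
    rintro ⟨i, c⟩ ⟨j, d⟩
    by_cases h : i = j
    · subst h
      simpa [hEw] using hcov i c d
    · simpa [hEw, h] using hcross i j h c d
  -- entries of C
  have hC : ∀ (i j : Fin m) (c : Fin k) (d : Fin k),
      (Xs i * (Xᵀ * X)⁻¹ * Xᵀ) c (j, d) = (Xs i * (Xᵀ * X)⁻¹ * (Xs j)ᵀ) c d := by
    intro i j c d
    simp [Matrix.mul_apply, hX, Matrix.transpose_apply]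
  -- residual representation
  have hres : ∀ (ω : Ω) (i : Fin m) (c : Fin k),
      (y i ω - (Xs i).mulVec (βtil ω)) c
        = ∑ p : Fin m × Fin k, u i c p * (y p.1 ω - (Xs p.1).mulVec β) p.2 := by
    intro ω i c
    have hβω : βtil ω = β + ((Xᵀ * X)⁻¹ * Xᵀ).mulVec
        (fun p : Fin m × Fin k => (y p.1 ω - (Xs p.1).mulVec β) p.2) := by
      simp only [hβtil]
      have h1 : (fun p : Fin m × Fin k => y p.1 ω p.2)
          = X.mulVec β + fun p : Fin m × Fin k => (y p.1 ω - (Xs p.1).mulVec β) p.2 := by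
        funext p
        simp [hX, Matrix.mulVec, dotProduct, Pi.sub_apply]
      rw [h1, Matrix.mulVec_add, Matrix.mulVec_add, Matrix.mulVec_mulVec,
        Matrix.mulVec_mulVec, Matrix.mul_assoc, Matrix.nonsing_inv_mul _ hXX, Matrix.one_mulVec,
        Matrix.mulVec_mulVec]
    have h2 : ∑ p : Fin m × Fin k, u i c p * (y p.1 ω - (Xs p.1).mulVec β) p.2
        = (y i ω - (Xs i).mulVec β) c
          - ((Xs i * (Xᵀ * X)⁻¹ * Xᵀ).mulVec
              (fun p : Fin m × Fin k => (y p.1 ω - (Xs p.1).mulVec β) p.2)) c := by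
      simp [hu, sub_mul, Finset.sum_sub_distrib, ite_mul, one_mul, zero_mul,
        Finset.sum_ite_eq', Matrix.mulVec, dotProduct]
    rw [h2, hβω]
    simp [Matrix.mulVec_add, Matrix.mulVec_mulVec, Pi.sub_apply, Pi.add_apply,
      Matrix.mul_assoc]
    ring
  -- rewrite Ψhat entrywise
  have hΨ' : ∀ ω, Ψhat ω a b = (m : ℝ)⁻¹ * ∑ i,
      ((∑ p : Fin m × Fin k, u i a p * (y p.1 ω - (Xs p.1).mulVec β) p.2)
        * (∑ q : Fin m × Fin k, u i b q * (y q.1 ω - (Xs q.1).mulVec β) q.2)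
        - D i a b) := by
    intro ω
    rw [hΨhat]
    simp only [Matrix.smul_apply, Matrix.sum_apply, Matrix.sub_apply, Matrix.of_apply,
      smul_eq_mul]
    congr 1
    refine Finset.sum_congr rfl fun i _ => ?_
    rw [hres ω i a, hres ω i b]
  -- product expansion
  have hprodeq : ∀ (i : Fin m) (ω : Ω),
      (∑ p : Fin m × Fin k, u i a p * (y p.1 ω - (Xs p.1).mulVec β) p.2)
        * (∑ q : Fin m × Fin k, u i b q * (y q.1 ω - (Xs q.1).mulVec β) q.2)
      = ∑ p : Fin m × Fin k, ∑ q : Fin m × Fin k, (u i a p * u i b q)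
          * ((y p.1 ω - (Xs p.1).mulVec β) p.2 * (y q.1 ω - (Xs q.1).mulVec β) q.2) := by
    intro i ω
    rw [Finset.sum_mul_sum]
    exact Finset.sum_congr rfl fun p _ => Finset.sum_congr rfl fun q _ => by ring
  have hint3 : ∀ i : Fin m, Integrable (fun ω =>
      ∑ p : Fin m × Fin k, ∑ q : Fin m × Fin k, (u i a p * u i b q)
        * ((y p.1 ω - (Xs p.1).mulVec β) p.2 * (y q.1 ω - (Xs q.1).mulVec β) q.2)) μ :=
    fun i => integrable_finset_sum _ fun p _ => integrable_finset_sum _ fun q _ =>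
      (hint p.1 q.1 p.2 q.2).const_mul _
  have hint4 : ∀ i : Fin m, Integrable (fun ω =>
      (∑ p : Fin m × Fin k, u i a p * (y p.1 ω - (Xs p.1).mulVec β) p.2)
        * (∑ q : Fin m × Fin k, u i b q * (y q.1 ω - (Xs q.1).mulVec β) q.2)) μ :=
    fun i => (hint3 i).congr (Filter.Eventually.of_forall fun ω => (hprodeq i ω).symm)
  have hint2 : ∀ i : Fin m, Integrable (fun ω =>
      (∑ p : Fin m × Fin k, u i a p * (y p.1 ω - (Xs p.1).mulVec β) p.2)
        * (∑ q : Fin m × Fin k, u i b q * (y q.1 ω - (Xs q.1).mulVec β) q.2)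
        - D i a b) μ := fun i => (hint4 i).sub (integrable_const _)
  -- integral of the product
  have hIprod : ∀ i : Fin m,
      (∫ ω, (∑ p : Fin m × Fin k, u i a p * (y p.1 ω - (Xs p.1).mulVec β) p.2)
        * (∑ q : Fin m × Fin k, u i b q * (y q.1 ω - (Xs q.1).mulVec β) q.2) ∂μ)
      = ∑ p : Fin m × Fin k, ∑ q : Fin m × Fin k, (u i a p * u i b q) * Ew p q := by
    intro i
    simp only [hprodeq i]
    rw [integral_finset_sum _ (fun p _ => integrable_finset_sum _ fun q _ =>
      (hint p.1 q.1 p.2 q.2).const_mul _)]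
    refine Finset.sum_congr rfl fun p _ => ?_
    rw [integral_finset_sum _ (fun q _ => (hint p.1 q.1 p.2 q.2).const_mul _)]
    refine Finset.sum_congr rfl fun q _ => ?_
    rw [integral_const_mul, hEp p q]
  -- the expectation of Ψhat a b
  have hL : (∫ ω, Ψhat ω a b ∂μ) = (m : ℝ)⁻¹ * ∑ i,
      ((∑ p : Fin m × Fin k, ∑ q : Fin m × Fin k, (u i a p * u i b q) * Ew p q)
        - D i a b) := by
    simp only [hΨ']
    rw [integral_const_mul, integral_finset_sum _ (fun i _ => hint2 i)]
    congr 1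
    refine Finset.sum_congr rfl fun i _ => ?_
    rw [integral_sub (hint4 i) (integrable_const _), hIprod i]
    simp
  -- the key algebraic identity
  have halg : ∀ i : Fin m,
      (∑ p : Fin m × Fin k, ∑ q : Fin m × Fin k, (u i a p * u i b q) * Ew p q)
      = (Ψ + D i) a b
        - ((Ψ + D i) * Xs i * (Xᵀ * X)⁻¹ * (Xs i)ᵀ) a b
        - (Xs i * (Xᵀ * X)⁻¹ * (Xs i)ᵀ * (Ψ + D i)) a b
        + (Xs i * (Xᵀ * X)⁻¹ * (∑ j, (Xs j)ᵀ * (Ψ + D j) * Xs j)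
            * (Xᵀ * X)⁻¹ * (Xs i)ᵀ) a b := by
    intro i
    have hS : (Xs i * (Xᵀ * X)⁻¹ * (Xs i)ᵀ)ᵀ = Xs i * (Xᵀ * X)⁻¹ * (Xs i)ᵀ := by
      rw [Matrix.transpose_mul, Matrix.transpose_mul, Matrix.transpose_transpose, hGsym,
        Matrix.mul_assoc]
    have hSy : ∀ c d : Fin k, (Xs i * (Xᵀ * X)⁻¹ * (Xs i)ᵀ) c d
        = (Xs i * (Xᵀ * X)⁻¹ * (Xs i)ᵀ) d c := fun c d => by
      rw [show (Xs i * (Xᵀ * X)⁻¹ * (Xs i)ᵀ) c d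
        = (Xs i * (Xᵀ * X)⁻¹ * (Xs i)ᵀ)ᵀ d c from rfl, hS]
    have hTT : ∀ j : Fin m, (Xs i * (Xᵀ * X)⁻¹ * (Xs j)ᵀ)ᵀ
        = Xs j * ((Xᵀ * X)⁻¹ * (Xs i)ᵀ) := by
      intro j
      rw [Matrix.transpose_mul, Matrix.transpose_mul, Matrix.transpose_transpose, hGsym]
    have hexp : ∀ p q : Fin m × Fin k, (u i a p * u i b q) * Ew p q
        = (if p = (i, a) then (if q = (i, b) then Ew p q else 0) else 0)
          - (if p = (i, a) then (Xs i * (Xᵀ * X)⁻¹ * Xᵀ) b q * Ew p q else 0)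
          - (if q = (i, b) then (Xs i * (Xᵀ * X)⁻¹ * Xᵀ) a p * Ew p q else 0)
          + (Xs i * (Xᵀ * X)⁻¹ * Xᵀ) a p * ((Xs i * (Xᵀ * X)⁻¹ * Xᵀ) b q * Ew p q) := by
      intro p q
      simp only [hu]
      split_ifs <;> ring
    have e1 : (∑ p : Fin m × Fin k, ∑ q : Fin m × Fin k, (u i a p * u i b q) * Ew p q)
        = Ew (i, a) (i, b)
          - (∑ q : Fin m × Fin k, (Xs i * (Xᵀ * X)⁻¹ * Xᵀ) b q * Ew (i, a) q)
          - (∑ p : Fin m × Fin k, (Xs i * (Xᵀ * X)⁻¹ * Xᵀ) a p * Ew p (i, b))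
          + ∑ p : Fin m × Fin k, ∑ q : Fin m × Fin k,
              (Xs i * (Xᵀ * X)⁻¹ * Xᵀ) a p * ((Xs i * (Xᵀ * X)⁻¹ * Xᵀ) b q * Ew p q) := by
      simp only [hexp, Finset.sum_sub_distrib, Finset.sum_add_distrib, stmt8_sum_ite_const,
        Finset.sum_ite_eq', Finset.mem_univ, if_true]
    have hT1 : Ew (i, a) (i, b) = (Ψ + D i) a b := by simp [hEw]
    have hT2 : (∑ q : Fin m × Fin k, (Xs i * (Xᵀ * X)⁻¹ * Xᵀ) b q * Ew (i, a) q)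
        = ((Ψ + D i) * Xs i * (Xᵀ * X)⁻¹ * (Xs i)ᵀ) a b := by
      rw [Fintype.sum_prod_type]
      simp only [hEw, hC, mul_ite, mul_zero, stmt8_sum_ite_const, Finset.sum_ite_eq,
        Finset.mem_univ, if_true]
      calc ∑ d, (Xs i * (Xᵀ * X)⁻¹ * (Xs i)ᵀ) b d * (Ψ + D i) a d
          = ∑ d, (Ψ + D i) a d * (Xs i * (Xᵀ * X)⁻¹ * (Xs i)ᵀ) d b :=
            Finset.sum_congr rfl fun d _ => by rw [hSy b d]; ring
        _ = ((Ψ + D i) * (Xs i * (Xᵀ * X)⁻¹ * (Xs i)ᵀ)) a b := (Matrix.mul_apply).symm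
        _ = ((Ψ + D i) * Xs i * (Xᵀ * X)⁻¹ * (Xs i)ᵀ) a b := by
            simp only [Matrix.mul_assoc]
    have hT3 : (∑ p : Fin m × Fin k, (Xs i * (Xᵀ * X)⁻¹ * Xᵀ) a p * Ew p (i, b))
        = (Xs i * (Xᵀ * X)⁻¹ * (Xs i)ᵀ * (Ψ + D i)) a b := by
      rw [Fintype.sum_prod_type]
      simp only [hEw, hC, mul_ite, mul_zero, stmt8_sum_ite_const, Finset.sum_ite_eq',
        Finset.mem_univ, if_true]
      rw [Matrix.mul_apply]
    have hdist : Xs i * (Xᵀ * X)⁻¹ * (∑ j, (Xs j)ᵀ * (Ψ + D j) * Xs j)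
          * (Xᵀ * X)⁻¹ * (Xs i)ᵀ
        = ∑ j, Xs i * (Xᵀ * X)⁻¹ * (Xs j)ᵀ * (Ψ + D j) * (Xs j * ((Xᵀ * X)⁻¹ * (Xs i)ᵀ)) := by
      rw [Matrix.mul_sum, Matrix.sum_mul, Matrix.sum_mul]
      exact Finset.sum_congr rfl fun j _ => by simp only [Matrix.mul_assoc]
    have hT4 : (∑ p : Fin m × Fin k, ∑ q : Fin m × Fin k,
          (Xs i * (Xᵀ * X)⁻¹ * Xᵀ) a p * ((Xs i * (Xᵀ * X)⁻¹ * Xᵀ) b q * Ew p q))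
        = (Xs i * (Xᵀ * X)⁻¹ * (∑ j, (Xs j)ᵀ * (Ψ + D j) * Xs j)
            * (Xᵀ * X)⁻¹ * (Xs i)ᵀ) a b := by
      rw [Fintype.sum_prod_type]
      calc (∑ j, ∑ c, ∑ q : Fin m × Fin k, (Xs i * (Xᵀ * X)⁻¹ * Xᵀ) a (j, c)
              * ((Xs i * (Xᵀ * X)⁻¹ * Xᵀ) b q * Ew (j, c) q))
          = ∑ j, ∑ c, ∑ d, (Xs i * (Xᵀ * X)⁻¹ * (Xs j)ᵀ) a c
              * ((Xs i * (Xᵀ * X)⁻¹ * (Xs j)ᵀ) b d * (Ψ + D j) c d) := by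
            refine Finset.sum_congr rfl fun j _ => Finset.sum_congr rfl fun c _ => ?_
            rw [Fintype.sum_prod_type]
            simp only [hEw, hC, mul_ite, mul_zero, stmt8_sum_ite_const, Finset.sum_ite_eq,
              Finset.mem_univ, if_true]
        _ = ∑ j, (Xs i * (Xᵀ * X)⁻¹ * (Xs j)ᵀ * (Ψ + D j)
              * (Xs i * (Xᵀ * X)⁻¹ * (Xs j)ᵀ)ᵀ) a b := by
            refine Finset.sum_congr rfl fun j _ => ?_
            rw [← stmt8_sandwich]
            exact Finset.sum_congr rfl fun c _ => Finset.sum_congr rfl fun d _ => by ring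
        _ = (Xs i * (Xᵀ * X)⁻¹ * (∑ j, (Xs j)ᵀ * (Ψ + D j) * Xs j)
              * (Xᵀ * X)⁻¹ * (Xs i)ᵀ) a b := by
            rw [hdist, Matrix.sum_apply]
            exact Finset.sum_congr rfl fun j _ => by rw [hTT j]
    rw [e1, hT1, hT2, hT3, hT4]
  rw [hL]
  have hsummand : ∀ i : Fin m,
      ((∑ p : Fin m × Fin k, ∑ q : Fin m × Fin k, (u i a p * u i b q) * Ew p q)
        - D i a b)
      = Ψ a b + ((Xs i * (Xᵀ * X)⁻¹ * (∑ j, (Xs j)ᵀ * (Ψ + D j) * Xs j)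
            * (Xᵀ * X)⁻¹ * (Xs i)ᵀ) a b
          - ((Ψ + D i) * Xs i * (Xᵀ * X)⁻¹ * (Xs i)ᵀ) a b
          - (Xs i * (Xᵀ * X)⁻¹ * (Xs i)ᵀ * (Ψ + D i)) a b) := by
    intro i
    rw [halg i]
    simp only [Matrix.add_apply]
    ring
  rw [Finset.sum_congr rfl fun i _ => hsummand i]
  rw [Finset.sum_add_distrib, Finset.sum_const, Finset.card_univ, Fintype.card_fin,
    nsmul_eq_mul]
  simp only [Finset.sum_sub_distrib]
  simp only [Matrix.sub_apply, Matrix.smul_apply, Matrix.sum_apply, smul_eq_mul]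
  try field_simp
  try ring
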